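/- CLA1 proves the formula ⊓x⊓y(x=y ⊔ x≠y); that is, the decidability of equality of natural numbers is provable in the computability-logic-based arithmetic CLA1. -/

import Mathlib

namespace CoL

attribute [local instance 10] Classical.propDecidable

noncomputable section

/-! ## Players, moves, runs -/

/-- The two players: the machine `⊤` and the environment `⊥`. -/
inductive Player where
  | top
  | bot
deriving DecidableEq, Inhabited

/-- The adversary of a player. -/
def Player.opp : Player → Player
  | .top => .bot
  | .bot => .top

/-- Moves, with enough structure for choice/parallel/dfb-style prefixed moves. -/
inductive Move where
  | choice : ℕ → Move
  | par : Bool → Move → Move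
  | succd : Move → Move
  | ante : List Bool → Move → Move
  | repl : List Bool → Move
deriving DecidableEq, Inhabited

/-- A labeled move: a move together with the player who made it. -/
structure Labmove where
  player : Player
  move : Move
deriving DecidableEq, Inhabited

/-- A run: a finite or infinite sequence of labeled moves.  A position is a finite run,
represented by a `List Labmove`. -/
inductive RunT where
  | fin : List Labmove → RunT
  | inf : (ℕ → Labmove) → RunT

namespace RunT

def get : RunT → ℕ → Option Labmove
  | .fin l, n => l[n]?
  | .inf f, n => some (f n)

def take : RunT → ℕ → List Labmove
  | .fin l, n => l.take n
  | .inf f, n => (List.range n).map f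

def hasPrefix (Γ : RunT) (Φ : List Labmove) : Prop := Γ.take Φ.length = Φ

end RunT

/-- Switch the label of a labmove to the adversary's. -/
def Labmove.flip (lm : Labmove) : Labmove := ⟨lm.player.opp, lm.move⟩

def RunT.flip : RunT → RunT
  | .fin l => .fin (l.map Labmove.flip)
  | .inf f => .inf fun n => (f n).flip

theorem not_infinite_bound {P : ℕ → Prop} (h : ¬ (setOf P).Infinite) :
    ∃ N : ℕ, ∀ n, P n → n < N := by
  rw [Set.not_infinite] at h
  obtain ⟨N, hN⟩ := h.bddAbove
  exact ⟨N + 1, fun n hn => Nat.lt_succ_of_le (hN hn)⟩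

/-- The subsequence of a run obtained by a partial relabeling function, with the
surviving moves reindexed consecutively (in the original order). -/
def RunT.fmap (g : Labmove → Option Labmove) : RunT → RunT
  | .fin l => .fin (l.filterMap g)
  | .inf f =>
    if h : {n | (g (f n)).isSome = true}.Infinite then
      .inf fun k => (g (f (Nat.nth (fun n => (g (f n)).isSome = true) k))).getD default
    else
      .fin ((List.range (not_infinite_bound h).choose).filterMap fun n => g (f n))

/-- A run contains only finitely many labmoves satisfying `P`. -/
def RunT.finMany (P : Labmove → Prop) : RunT → Prop
  | .fin _ => True
  | .inf f => {n | P (f n)}.Finite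

/-- The position (index) of the `k`-th (0-based) natural number satisfying `P`,
if it exists. -/
def kthIdx (P : ℕ → Prop) (k : ℕ) : Option ℕ :=
  if h : ∃ n, P n ∧ {m | m < n ∧ P m}.ncard = k then some (Nat.find h) else none

/-! ## Constant games -/

/-- A constant game: a set of legal (finite) positions together with a winner
function on runs.  (Legality of arbitrary runs is derived: a run is legal iff all its
finite initial segments are legal positions.) -/
structure ConstGame where
  legalPos : List Labmove → Prop
  wn : RunT → Player

namespace ConstGame

/-- A run is legal iff every finite initial segment of it is a legal position. -/
def legal (A : ConstGame) (Γ : RunT) : Prop := ∀ n, A.legalPos (Γ.take n)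

/-- A run is `p`-illegal iff the last move of its shortest illegal initial segment is
`p`-labeled. -/
def illegalFor (A : ConstGame) (p : Player) (Γ : RunT) : Prop :=
  ∃ (Φ : List Labmove) (lm : Labmove),
    Γ.hasPrefix (Φ ++ [lm]) ∧ A.legalPos Φ ∧ ¬ A.legalPos (Φ ++ [lm]) ∧ lm.player = p

/-- A run is won by `p` iff it is illegal with the adversary the offender, or it is a
legal run whose winner is `p`. -/
def wonBy (A : ConstGame) (p : Player) (Γ : RunT) : Prop :=
  A.illegalFor p.opp Γ ∨ (A.legal Γ ∧ A.wn Γ = p)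

end ConstGame

/-- The `n`-th entry of the run exists and is `q`-labeled. -/
def RunT.playerAt (Γ : RunT) (q : Player) (n : ℕ) : Prop :=
  ∃ lm, Γ.get n = some lm ∧ lm.player = q

/-- Index of the `k`-th `q`-labeled move of a run. -/
def RunT.kthPlayerIdx (Γ : RunT) (q : Player) (k : ℕ) : Option ℕ := kthIdx (Γ.playerAt q) k

/-- The `k`-th `q`-labeled move of a run. -/
def RunT.kthPlayerMove (Γ : RunT) (q : Player) (k : ℕ) : Option Move :=
  (Γ.kthPlayerIdx q k).bind fun n => (Γ.get n).map Labmove.move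

/-- `Δ` is a `p`-delay of `Γ`: both players' subsequences of moves agree, and whenever
the `k`-th `p`-labeled move occurs later than the `n`-th `¬p`-labeled move in `Γ`,
so does it in `Δ`. -/
def IsDelay (p : Player) (Γ Δ : RunT) : Prop :=
  (∀ (q : Player) (k : ℕ), Γ.kthPlayerMove q k = Δ.kthPlayerMove q k) ∧
  (∀ (k n a b c d : ℕ),
    Γ.kthPlayerIdx p k = some a → Γ.kthPlayerIdx p.opp n = some b →
    Δ.kthPlayerIdx p k = some c → Δ.kthPlayerIdx p.opp n = some d →
    b < a → d < c)

/-- A constant game is static. -/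
def ConstGame.Static (A : ConstGame) : Prop :=
  ∀ (p : Player) (Γ Δ : RunT), IsDelay p Γ Δ →
    (¬ A.illegalFor p Γ → ¬ A.illegalFor p Δ) ∧ (A.wonBy p Γ → A.wonBy p Δ)

/-- Valuations: assignments of constants (natural numbers) to variables. -/
abbrev Valuation := ℕ → ℕ

/-- A game: a function from valuations to constant games. -/
abbrev Game := Valuation → ConstGame

/-- A game is static iff all of its instances are. -/
def Game.Static (A : Game) : Prop := ∀ e, (A e).Static

/-! ## Machines: EPMs and BMEPMs -/

/-- An action of an EPM at a step: make a (single) move, grant permission, or keep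
computing. -/
inductive EAct where
  | move : Move → EAct
  | permit
  | think

/-- An easy-play machine, abstracted as a deterministic interactive algorithm: its
action is a function of the valuation, the current position (run-tape content), and the
clock cycle. -/
structure EPM where
  act : Valuation → List Labmove → ℕ → EAct

/-- The position after `t` steps of a play of EPM `M` on valuation `e`, where `env t`
is the environment's (optional, single) response upon a permission granted at step
`t`. -/
def EPM.pos (M : EPM) (e : Valuation) (env : ℕ → Option Move) : ℕ → List Labmove
  | 0 => []
  | t + 1 =>
    match M.act e (M.pos e env t) t with
    | .move m => M.pos e env t ++ [⟨.top, m⟩]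
    | .permit => M.pos e env t ++ (env t).toList.map fun m => ⟨.bot, m⟩
    | .think => M.pos e env t

def spelledGet (pos : ℕ → List Labmove) (n : ℕ) : Option Labmove :=
  if h : ∃ t, n < (pos t).length then (pos (Nat.find h))[n]? else none

/-- The run incrementally spelled by a monotone sequence of positions. -/
def spelled (pos : ℕ → List Labmove) : RunT :=
  if h : ∃ t, ∀ s, (pos s).length ≤ (pos t).length then .fin (pos (Nat.find h))
  else .inf fun n => (spelledGet pos n).getD default

/-- A computation branch is fair iff permission is granted infinitely many times. -/
def EPM.Fair (M : EPM) (e : Valuation) (env : ℕ → Option Move) : Prop :=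
  ∀ N, ∃ t, N ≤ t ∧ M.act e (M.pos e env t) t = .permit

/-- `M ⊨ₑ A`: machine `M` wins game `A` on valuation `e`. -/
def EPM.WinsOn (M : EPM) (A : Game) (e : Valuation) : Prop :=
  ∀ env : ℕ → Option Move,
    ¬ (A e).illegalFor .bot (spelled (M.pos e env)) →
      M.Fair e env ∧ (A e).wonBy .top (spelled (M.pos e env))

/-- `M ⊨ A`: `M` wins `A` on every valuation. -/
def EPM.Wins (M : EPM) (A : Game) : Prop := ∀ e, M.WinsOn A e

/-- An action of a block-move EPM: make a finite block of moves, grant permission, or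
keep computing. -/
inductive BAct where
  | moves : List Move → BAct
  | permit
  | think

/-- A block-move EPM: like an EPM, but either player may make a finite block of moves
at a time. -/
structure BMEPM where
  act : Valuation → List Labmove → ℕ → BAct

def BMEPM.pos (M : BMEPM) (e : Valuation) (env : ℕ → List Move) : ℕ → List Labmove
  | 0 => []
  | t + 1 =>
    match M.act e (M.pos e env t) t with
    | .moves ms => M.pos e env t ++ ms.map fun m => ⟨.top, m⟩
    | .permit => M.pos e env t ++ (env t).map fun m => ⟨.bot, m⟩
    | .think => M.pos e env t

def BMEPM.Fair (M : BMEPM) (e : Valuation) (env : ℕ → List Move) : Prop :=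
  ∀ N, ∃ t, N ≤ t ∧ M.act e (M.pos e env t) t = .permit

/-- `M ⊨ₑ A` for a BMEPM. -/
def BMEPM.WinsOn (M : BMEPM) (A : Game) (e : Valuation) : Prop :=
  ∀ env : ℕ → List Move,
    ¬ (A e).illegalFor .bot (spelled (M.pos e env)) →
      M.Fair e env ∧ (A e).wonBy .top (spelled (M.pos e env))

def BMEPM.Wins (M : BMEPM) (A : Game) : Prop := ∀ e, M.WinsOn A e

/-- A game is computable iff some EPM wins it. -/
def Game.Computable (A : Game) : Prop := ∃ M : EPM, M.Wins A

/-! ## Game operations -/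

/-- The elementary game with no nonempty legal runs, won by `⊤` iff `P` holds. -/
def elemGame (P : Prop) : ConstGame where
  legalPos Φ := Φ = []
  wn _ := if P then .top else .bot

/-- Negation: the roles of the two players are interchanged. -/
def gNeg (A : ConstGame) : ConstGame where
  legalPos Φ := A.legalPos (Φ.map Labmove.flip)
  wn Γ := (A.wn Γ.flip).opp

def projPar (b : Bool) : Labmove → Option Labmove
  | ⟨p, .par b' β⟩ => if b' = b then some ⟨p, β⟩ else none
  | _ => none

/-- Parallel (binary) conjunction of constant games. -/
def gameAnd (A B : ConstGame) : ConstGame where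
  legalPos Φ :=
    (∀ lm ∈ Φ, ∃ b β, lm.move = Move.par b β) ∧
    A.legalPos (Φ.filterMap (projPar false)) ∧ B.legalPos (Φ.filterMap (projPar true))
  wn Γ :=
    if A.wn (Γ.fmap (projPar false)) = .top ∧ B.wn (Γ.fmap (projPar true)) = .top
    then .top else .bot

/-- Choice conjunction over an index set `S`: `⊥` chooses `n ∈ S` and play continues
in `f n`; if no choice is ever made, `⊤` wins. -/
def gameCAnd (S : Set ℕ) (f : ℕ → ConstGame) : ConstGame where
  legalPos := fun Φ =>
    match Φ with
    | [] => True
    | ⟨.bot, .choice n⟩ :: rest => n ∈ S ∧ (f n).legalPos rest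
    | _ => False
  wn := fun Γ =>
    match Γ with
    | .fin [] => .top
    | .fin (⟨.bot, .choice n⟩ :: rest) => (f n).wn (.fin rest)
    | .fin (_ :: _) => .top
    | .inf g =>
      match g 0 with
      | ⟨.bot, .choice n⟩ => (f n).wn (.inf fun k => g (k + 1))
      | _ => .top

/-- Blind universal quantification (for unistructural families of games). -/
def gameAll (f : ℕ → ConstGame) : ConstGame where
  legalPos Φ := ∀ c, (f c).legalPos Φ
  wn Γ := if ∀ c, (f c).wn Γ = .top then .top else .bot

/-! ## Trees of games and dfb-reduction -/

/-- A tree of (constant) games. -/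
inductive GTree where
  | leaf : ConstGame → GTree
  | node : GTree → GTree → GTree

/-- The leaves of a tree of games, together with their (bit-string) addresses. -/
def GTree.leaves : GTree → List (List Bool × ConstGame)
  | .leaf A => [([], A)]
  | .node l r =>
      (l.leaves.map fun p => (false :: p.1, p.2)) ++ (r.leaves.map fun p => (true :: p.1, p.2))

/-- `w` is a prefix of the infinite bit string `x`. -/
def prefInf (w : List Bool) (x : ℕ → Bool) : Prop :=
  ∀ (i : ℕ) (hi : i < w.length), w.get ⟨i, hi⟩ = x i

/-- Projection to the succedent: keep labmoves `℘S.β`, stripping the prefix. -/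
def projS : Labmove → Option Labmove
  | ⟨p, .succd β⟩ => some ⟨p, β⟩
  | _ => none

/-- Projection along an infinite bit string `x`: keep labmoves `℘w.β` with `w ≼ x`,
stripping the prefix. -/
def projA (x : ℕ → Bool) : Labmove → Option Labmove
  | ⟨p, .ante w β⟩ => if prefInf w x then some ⟨p, β⟩ else none
  | _ => none

/-- Shape/precedence conditions on the `i`-th labmove of a position of a dfb-reduction
(conditions 1-3 of the definition of dfb-reduction). -/
def dfbShape (T : GTree) (Φ : List Labmove) (i : ℕ) : Labmove → Prop
  | ⟨_, .succd _⟩ => True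
  | ⟨.top, .repl w⟩ =>
      (∃ p ∈ T.leaves, p.1 = w) ∨
      (w ≠ [] ∧ ∃ j < i, Φ[j]? = some ⟨.top, .repl w.dropLast⟩)
  | ⟨.bot, .repl _⟩ => False
  | ⟨_, .ante w _⟩ =>
      (∃ p ∈ T.leaves, w <+: p.1) ∨
      (w ≠ [] ∧ ∃ j < i, Φ[j]? = some ⟨.top, .repl w.dropLast⟩)
  | ⟨_, .choice _⟩ => False
  | ⟨_, .par _ _⟩ => False

/-- Legal positions of the dfb-reduction `T ∘̸– B`. -/
def dfbLegalPos (T : GTree) (B : ConstGame) (Φ : List Labmove) : Prop :=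
  (∀ (i : ℕ) (lm : Labmove), Φ[i]? = some lm → dfbShape T Φ i lm) ∧
  (∀ w : List Bool, Φ.count ⟨Player.top, Move.repl w⟩ ≤ 1) ∧
  B.legalPos (Φ.filterMap projS) ∧
  (∀ p ∈ T.leaves, ∀ x : ℕ → Bool, prefInf p.1 x →
      (gNeg p.2).legalPos (Φ.filterMap (projA x)))

/-- Replicative labmoves. -/
def isReplMove (lm : Labmove) : Prop := ∃ w, lm.move = Move.repl w

/-- The dfb-reduction of game `B` to the tree of games `T`.  `⊤` wins a legal run iff
it has made only finitely many replications and either wins in the succedent or wins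
(as `⊥`) in some antecedental leaf. -/
def dfb (T : GTree) (B : ConstGame) : ConstGame where
  legalPos := dfbLegalPos T B
  wn Γ :=
    if Γ.finMany isReplMove ∧
       (B.wn (Γ.fmap projS) = .top ∨
        ∃ p ∈ T.leaves, ∃ x : ℕ → Bool, prefInf p.1 x ∧
          (gNeg p.2).wn (Γ.fmap (projA x)) = .top)
    then .top else .bot

/-! ## Syntax: terms, formulas, sequents -/

/-- Function symbols: an arity and an index (infinitely many of each arity). -/
structure FuncSym where
  ar : ℕ
  idx : ℕ
deriving DecidableEq

/-- Predicate symbols: the logical symbol `=` plus infinitely many nonlogical symbols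
of each arity. -/
inductive PredSym where
  | eq
  | pred : ℕ → ℕ → PredSym
deriving DecidableEq

def PredSym.arity : PredSym → ℕ
  | .eq => 2
  | .pred n _ => n

/-- Terms: variables, constants (decimal numerals, i.e. natural numbers), and
applications of function symbols. -/
inductive Term where
  | var : ℕ → Term
  | const : ℕ → Term
  | func : (f : FuncSym) → (Fin f.ar → Term) → Term

/-- Formulas.  `¬` is only applied to atoms: an atom carries a polarity bit
(`true` = negated).  `→` is an abbreviation (see `Fml.imp`). -/
inductive Fml where
  | tt
  | ff
  | atom : Bool → (p : PredSym) → (Fin p.arity → Term) → Fml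
  | and : Fml → Fml → Fml
  | or : Fml → Fml → Fml
  | cand : Fml → Fml → Fml
  | cor : Fml → Fml → Fml
  | all : ℕ → Fml → Fml
  | ex : ℕ → Fml → Fml
  | call : ℕ → Fml → Fml
  | cex : ℕ → Fml → Fml

def duo {α : Sort*} (a b : α) : Fin 2 → α := fun i => if i.val = 0 then a else b

/-- An interpretation: sends function symbols to functions on `ℕ` and predicate symbols
to elementary games (predicates), such that `=` is interpreted as an equivalence
relation preserved by all interpreted functions and respected by all interpreted
predicates. -/
structure Interp where
  fn : (f : FuncSym) → (Fin f.ar → ℕ) → ℕ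
  pr : (p : PredSym) → (Fin p.arity → ℕ) → Prop
  eq_equiv : Equivalence fun a b => pr .eq (duo a b)
  fn_congr : ∀ (f : FuncSym) (u v : Fin f.ar → ℕ),
      (∀ i, pr .eq (duo (u i) (v i))) → pr .eq (duo (fn f u) (fn f v))
  pr_congr : ∀ (p : PredSym) (u v : Fin p.arity → ℕ),
      (∀ i, pr .eq (duo (u i) (v i))) → (pr p u ↔ pr p v)

def Term.eval (I : Interp) (e : Valuation) : Term → ℕ
  | .var x => e x
  | .const c => c
  | .func f ts => I.fn f fun i => (ts i).eval I e

def Valuation.upd (e : Valuation) (x c : ℕ) : Valuation := fun y => if y = x then c else e y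

/-- The game `F*` represented by a formula `F` under an interpretation `*`. -/
def Fml.game (I : Interp) : Fml → Valuation → ConstGame
  | .tt, _ => elemGame True
  | .ff, _ => elemGame False
  | .atom b p a, e => elemGame ((I.pr p fun i => (a i).eval I e) ↔ b = false)
  | .and A B, e => gameAnd (A.game I e) (B.game I e)
  | .or A B, e => gNeg (gameAnd (gNeg (A.game I e)) (gNeg (B.game I e)))
  | .cand A B, e => gameCAnd {n | n = 0 ∨ n = 1} fun n =>
      if n = 0 then A.game I e else B.game I e
  | .cor A B, e => gNeg (gameCAnd {n | n = 0 ∨ n = 1} fun n =>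
      gNeg (if n = 0 then A.game I e else B.game I e))
  | .all x A, e => gameAll fun c => A.game I (e.upd x c)
  | .ex x A, e => gNeg (gameAll fun c => gNeg (A.game I (e.upd x c)))
  | .call x A, e => gameCAnd Set.univ fun c => A.game I (e.upd x c)
  | .cex x A, e => gNeg (gameCAnd Set.univ fun c => gNeg (A.game I (e.upd x c)))

/-- A sequent `E₁,…,Eₙ ∘̸– F` with a list antecedent (standard-tree form). -/
structure Sequent where
  ante : List Fml
  succ : Fml

/-- The standard (right-nested) tree with the given yield. -/
def stdGTree (A : ConstGame) : List ConstGame → GTree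
  | [] => .leaf A
  | B :: rest => .node (.leaf A) (stdGTree B rest)

/-- The game represented by a sequent: the dfb-reduction of the succedent to the
standard tree of the antecedent (the succedent itself if the antecedent is empty). -/
def Sequent.game (I : Interp) (S : Sequent) : Game := fun e =>
  match S.ante with
  | [] => S.succ.game I e
  | E :: rest => dfb (stdGTree (E.game I e) (rest.map fun G => G.game I e)) (S.succ.game I e)

/-! ## Uniform-constructive soundness of rules -/

/-- A rule (a relation between lists of premise sequents and conclusion sequents) is
uniform-constructively sound iff there is an (effective) procedure turning machines
winning the premises under an interpretation into a machine winning the conclusion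
under the same interpretation. -/
def UCSound (R : List Sequent → Sequent → Prop) : Prop :=
  ∃ F : List Sequent → Sequent → List BMEPM → BMEPM,
    ∀ (Xs : List Sequent) (X0 : Sequent) (Ms : List BMEPM),
      R Xs X0 → Ms.length = Xs.length →
      ∀ (I : Interp) (e : Valuation),
        (∀ (i : ℕ) (hx : i < Xs.length) (hm : i < Ms.length),
            (Ms[i]'hm).WinsOn ((Xs[i]'hx).game I) e) →
        (F Xs X0 Ms).WinsOn (X0.game I) e

/-! ## Trees of formulas and general sequents -/

/-- A (nonempty) tree of formulas. -/
inductive FTree where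
  | leaf : Fml → FTree
  | node : FTree → FTree → FTree

/-- The yield of a tree of formulas. -/
def FTree.yield : FTree → List Fml
  | .leaf F => [F]
  | .node l r => l.yield ++ r.yield

def FTree.toGTree (I : Interp) (e : Valuation) : FTree → GTree
  | .leaf F => .leaf (F.game I e)
  | .node l r => .node (l.toGTree I e) (r.toGTree I e)

/-- A sequent whose antecedent is an arbitrary (possibly empty) tree of formulas. -/
structure TSeq where
  ante : Option FTree
  succ : Fml

def TSeq.game (I : Interp) (S : TSeq) : Game := fun e =>
  match S.ante with
  | none => S.succ.game I e
  | some T => dfb (T.toGTree I e) (S.succ.game I e)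

def stdFTree1 (F : Fml) : List Fml → FTree
  | [] => .leaf F
  | G :: rest => .node (.leaf F) (stdFTree1 G rest)

/-- The standard tree of formulas with a given yield. -/
def stdFTree : List Fml → Option FTree
  | [] => none
  | F :: rest => some (stdFTree1 F rest)

/-- Uniform-constructive soundness, for rules on tree-antecedent sequents. -/
def UCSoundT (R : List TSeq → TSeq → Prop) : Prop :=
  ∃ F : List TSeq → TSeq → List BMEPM → BMEPM,
    ∀ (Xs : List TSeq) (X0 : TSeq) (Ms : List BMEPM),
      R Xs X0 → Ms.length = Xs.length →
      ∀ (I : Interp) (e : Valuation),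
        (∀ (i : ℕ) (hx : i < Xs.length) (hm : i < Ms.length),
            (Ms[i]'hm).WinsOn ((Xs[i]'hx).game I) e) →
        (F Xs X0 Ms).WinsOn (X0.game I) e

/-! ## Substitution, occurrences -/

def Term.subst : Term → ℕ → Term → Term
  | .var y, x, t => if y = x then t else .var y
  | .const d, _, _ => .const d
  | .func f ts, x, t => .func f fun i => (ts i).subst x t

/-- Replace all free occurrences of variable `x` by term `t`. -/
def Fml.subst (x : ℕ) (t : Term) : Fml → Fml
  | .tt => .tt
  | .ff => .ff
  | .atom b p a => .atom b p fun i => (a i).subst x t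
  | .and A B => .and (A.subst x t) (B.subst x t)
  | .or A B => .or (A.subst x t) (B.subst x t)
  | .cand A B => .cand (A.subst x t) (B.subst x t)
  | .cor A B => .cor (A.subst x t) (B.subst x t)
  | .all y A => .all y (if y = x then A else A.subst x t)
  | .ex y A => .ex y (if y = x then A else A.subst x t)
  | .call y A => .call y (if y = x then A else A.subst x t)
  | .cex y A => .cex y (if y = x then A else A.subst x t)

def Term.hasVar (y : ℕ) : Term → Prop
  | .var x => x = y
  | .const _ => False
  | .func _ ts => ∃ i, (ts i).hasVar y

/-- `y` occurs (free, bound or as a binder) in the formula. -/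
def Fml.mentionsVar (y : ℕ) : Fml → Prop
  | .tt => False
  | .ff => False
  | .atom _ _ a => ∃ i, (a i).hasVar y
  | .and A B => A.mentionsVar y ∨ B.mentionsVar y
  | .or A B => A.mentionsVar y ∨ B.mentionsVar y
  | .cand A B => A.mentionsVar y ∨ B.mentionsVar y
  | .cor A B => A.mentionsVar y ∨ B.mentionsVar y
  | .all x A => x = y ∨ A.mentionsVar y
  | .ex x A => x = y ∨ A.mentionsVar y
  | .call x A => x = y ∨ A.mentionsVar y
  | .cex x A => x = y ∨ A.mentionsVar y

/-- `y` occurs as a bound variable (i.e. is used as a binder) in the formula. -/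
def Fml.bindsVar (y : ℕ) : Fml → Prop
  | .tt => False
  | .ff => False
  | .atom _ _ _ => False
  | .and A B => A.bindsVar y ∨ B.bindsVar y
  | .or A B => A.bindsVar y ∨ B.bindsVar y
  | .cand A B => A.bindsVar y ∨ B.bindsVar y
  | .cor A B => A.bindsVar y ∨ B.bindsVar y
  | .all x A => x = y ∨ A.bindsVar y
  | .ex x A => x = y ∨ A.bindsVar y
  | .call x A => x = y ∨ A.bindsVar y
  | .cex x A => x = y ∨ A.bindsVar y

/-- `y` occurs free in the formula. -/
def Fml.freeVar (y : ℕ) : Fml → Prop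
  | .tt => False
  | .ff => False
  | .atom _ _ a => ∃ i, (a i).hasVar y
  | .and A B => A.freeVar y ∨ B.freeVar y
  | .or A B => A.freeVar y ∨ B.freeVar y
  | .cand A B => A.freeVar y ∨ B.freeVar y
  | .cor A B => A.freeVar y ∨ B.freeVar y
  | .all x A => x ≠ y ∧ A.freeVar y
  | .ex x A => x ≠ y ∧ A.freeVar y
  | .call x A => x ≠ y ∧ A.freeVar y
  | .cex x A => x ≠ y ∧ A.freeVar y

def Sequent.mentionsVar (S : Sequent) (y : ℕ) : Prop :=
  (∃ E ∈ S.ante, E.mentionsVar y) ∨ S.succ.mentionsVar y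

def Sequent.bindsVar (S : Sequent) (y : ℕ) : Prop :=
  (∃ E ∈ S.ante, E.bindsVar y) ∨ S.succ.bindsVar y

/-! ## Elementarization, classical semantics, stability -/

/-- A formula is elementary iff it contains no choice operators. -/
def Fml.elementary : Fml → Prop
  | .tt => True
  | .ff => True
  | .atom _ _ _ => True
  | .and A B => A.elementary ∧ B.elementary
  | .or A B => A.elementary ∧ B.elementary
  | .cand _ _ => False
  | .cor _ _ => False
  | .all _ A => A.elementary
  | .ex _ A => A.elementary
  | .call _ _ => False
  | .cex _ _ => False

/-- The elementarization of a formula: replace all `⊔`/`⊔x`-subformulas by `⊥` and all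
`⊓`/`⊓x`-subformulas by `⊤`. -/
def Fml.elz : Fml → Fml
  | .tt => .tt
  | .ff => .ff
  | .atom b p a => .atom b p a
  | .and A B => .and A.elz B.elz
  | .or A B => .or A.elz B.elz
  | .cand _ _ => .tt
  | .cor _ _ => .ff
  | .all x A => .all x A.elz
  | .ex x A => .ex x A.elz
  | .call _ _ => .tt
  | .cex _ _ => .ff

/-- Standard (DeMorgan) negation of a formula. -/
def Fml.negF : Fml → Fml
  | .tt => .ff
  | .ff => .tt
  | .atom b p a => .atom (!b) p a
  | .and A B => .or A.negF B.negF
  | .or A B => .and A.negF B.negF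
  | .cand A B => .cor A.negF B.negF
  | .cor A B => .cand A.negF B.negF
  | .all x A => .ex x A.negF
  | .ex x A => .all x A.negF
  | .call x A => .cex x A.negF
  | .cex x A => .call x A.negF

/-- Implication as the standard abbreviation. -/
def Fml.imp (A B : Fml) : Fml := .or A.negF B

def bigAnd : Fml → List Fml → Fml
  | A, [] => A
  | A, B :: rest => .and A (bigAnd B rest)

/-- The elementarization of a sequent `G₁,…,Gₙ ∘̸– F`:
the elementary formula `‖G₁‖∧…∧‖Gₙ‖ → ‖F‖`. -/
def Sequent.elz (S : Sequent) : Fml :=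
  match S.ante with
  | [] => S.succ.elz
  | E :: rest => (bigAnd E.elz (rest.map Fml.elz)).imp S.succ.elz

/-- A classical first-order structure (with `=` interpreted as identity). -/
structure Struc where
  D : Type
  ne : Nonempty D
  cn : ℕ → D
  fn : (f : FuncSym) → (Fin f.ar → D) → D
  pr : (p : PredSym) → (Fin p.arity → D) → Prop
  eq_iden : ∀ a b : D, pr .eq (duo a b) ↔ a = b

def Term.evalS (St : Struc) (e : ℕ → St.D) : Term → St.D
  | .var x => e x
  | .const c => St.cn c
  | .func f ts => St.fn f fun i => (ts i).evalS St e

/-- Classical (Tarskian) truth of a formula in a structure under an assignment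
(choice operators are read classically; they do not occur in elementary formulas). -/
def Fml.trueIn (St : Struc) : Fml → (ℕ → St.D) → Prop
  | .tt, _ => True
  | .ff, _ => False
  | .atom b p a, e => ((St.pr p fun i => (a i).evalS St e) ↔ b = false)
  | .and A B, e => A.trueIn St e ∧ B.trueIn St e
  | .or A B, e => A.trueIn St e ∨ B.trueIn St e
  | .cand A B, e => A.trueIn St e ∧ B.trueIn St e
  | .cor A B, e => A.trueIn St e ∨ B.trueIn St e
  | .all x A, e => ∀ d, A.trueIn St fun y => if y = x then d else e y
  | .ex x A, e => ∃ d, A.trueIn St fun y => if y = x then d else e y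
  | .call x A, e => ∀ d, A.trueIn St fun y => if y = x then d else e y
  | .cex x A, e => ∃ d, A.trueIn St fun y => if y = x then d else e y

/-- Classical validity (= provability in classical predicate calculus with `=`, by
Gödel's completeness theorem). -/
def FValid (F : Fml) : Prop := ∀ (St : Struc) (e : ℕ → St.D), F.trueIn St e

/-- A sequent is stable iff its elementarization is classically valid. -/
def Sequent.stable (S : Sequent) : Prop := FValid S.elz

/-! ## The system CL12 -/

/-- Surface contexts: a formula with a hole not in the scope of any choice operator. -/
inductive FCtx where
  | hole
  | andL : FCtx → Fml → FCtx
  | andR : Fml → FCtx → FCtx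
  | orL : FCtx → Fml → FCtx
  | orR : Fml → FCtx → FCtx
  | allC : ℕ → FCtx → FCtx
  | exC : ℕ → FCtx → FCtx

def FCtx.fill : FCtx → Fml → Fml
  | .hole, H => H
  | .andL C B, H => .and (C.fill H) B
  | .andR A C, H => .and A (C.fill H)
  | .orL C B, H => .or (C.fill H) B
  | .orR A C, H => .or A (C.fill H)
  | .allC x C, H => .all x (C.fill H)
  | .exC x C, H => .ex x (C.fill H)

/-- `t` is a constant or a variable with no bound occurrences in the premise. -/
def TermOk (t : Term) (prem : Sequent) : Prop :=
  (∃ c, t = Term.const c) ∨ (∃ y, t = Term.var y ∧ ¬ prem.bindsVar y)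

/-- The single-premise rules of CL12: `⊓`-Choose, `⊔`-Choose, `⊓x`-Choose,
`⊔x`-Choose and Replicate.  `NonWaitStep Y X` means `X` follows from premise `Y`. -/
inductive NonWaitStep : Sequent → Sequent → Prop
  | candChoose (G K : List Fml) (C : FCtx) (H0 H1 : Fml) (i : Bool) (F : Fml) :
      NonWaitStep ⟨G ++ (C.fill (if i then H1 else H0)) :: K, F⟩
                  ⟨G ++ (C.fill (.cand H0 H1)) :: K, F⟩
  | corChoose (G : List Fml) (C : FCtx) (H0 H1 : Fml) (i : Bool) :
      NonWaitStep ⟨G, C.fill (if i then H1 else H0)⟩ ⟨G, C.fill (.cor H0 H1)⟩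
  | callChoose (G K : List Fml) (C : FCtx) (x : ℕ) (H : Fml) (t : Term) (F : Fml) :
      TermOk t ⟨G ++ (C.fill (H.subst x t)) :: K, F⟩ →
      NonWaitStep ⟨G ++ (C.fill (H.subst x t)) :: K, F⟩
                  ⟨G ++ (C.fill (.call x H)) :: K, F⟩
  | cexChoose (G : List Fml) (C : FCtx) (x : ℕ) (H : Fml) (t : Term) :
      TermOk t ⟨G, C.fill (H.subst x t)⟩ →
      NonWaitStep ⟨G, C.fill (H.subst x t)⟩ ⟨G, C.fill (.cex x H)⟩
  | replicate (G K : List Fml) (E F : Fml) :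
      NonWaitStep ⟨G ++ E :: K ++ [E], F⟩ ⟨G ++ E :: K, F⟩

/-- `Y` follows from the set `P` of premises by Wait. -/
def WaitStep (P : Set Sequent) (Y : Sequent) : Prop :=
  Y.stable ∧
  (∀ (C : FCtx) (H0 H1 : Fml), Y.succ = C.fill (.cand H0 H1) →
      (⟨Y.ante, C.fill H0⟩ : Sequent) ∈ P ∧ (⟨Y.ante, C.fill H1⟩ : Sequent) ∈ P) ∧
  (∀ (G K : List Fml) (C : FCtx) (H0 H1 : Fml),
      Y.ante = G ++ (C.fill (.cor H0 H1)) :: K →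
      (⟨G ++ (C.fill H0) :: K, Y.succ⟩ : Sequent) ∈ P ∧
      (⟨G ++ (C.fill H1) :: K, Y.succ⟩ : Sequent) ∈ P) ∧
  (∀ (C : FCtx) (x : ℕ) (H : Fml), Y.succ = C.fill (.call x H) →
      ∃ y, ¬ Y.mentionsVar y ∧
        (⟨Y.ante, C.fill (H.subst x (.var y))⟩ : Sequent) ∈ P) ∧
  (∀ (G K : List Fml) (C : FCtx) (x : ℕ) (H : Fml),
      Y.ante = G ++ (C.fill (.cex x H)) :: K →
      ∃ y, ¬ Y.mentionsVar y ∧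
        (⟨G ++ (C.fill (H.subst x (.var y))) :: K, Y.succ⟩ : Sequent) ∈ P)

/-- `X` follows from premises in `P` by one of the rules of CL12. -/
def CL12Step (P : Set Sequent) (X : Sequent) : Prop :=
  (∃ Y ∈ P, NonWaitStep Y X) ∨ WaitStep P X

/-- `L` is a CL12-proof of `X`: a nonempty sequence of sequents ending in `X` in which
every sequent follows from some earlier ones by a rule of CL12. -/
def IsCL12Proof (L : List Sequent) (X : Sequent) : Prop :=
  L ≠ [] ∧ L.getLast? = some X ∧
  ∀ (i : ℕ) (h : i < L.length), CL12Step {Y | Y ∈ L.take i} (L[i]'h)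

def CL12Proves (X : Sequent) : Prop := ∃ L, IsCL12Proof L X

/-- `Y` is a `⊥`-development of `X`. -/
inductive BotDev : Sequent → Sequent → Prop
  | c1 (E : List Fml) (C : FCtx) (H0 H1 : Fml) (i : Bool) :
      BotDev ⟨E, C.fill (.cand H0 H1)⟩ ⟨E, C.fill (if i then H1 else H0)⟩
  | c2 (E K : List Fml) (C : FCtx) (H0 H1 : Fml) (i : Bool) (F : Fml) :
      BotDev ⟨E ++ (C.fill (.cor H0 H1)) :: K, F⟩
             ⟨E ++ (C.fill (if i then H1 else H0)) :: K, F⟩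
  | c3 (E : List Fml) (C : FCtx) (x : ℕ) (H : Fml) (y : ℕ) :
      ¬ (Sequent.mk E (C.fill (.call x H))).mentionsVar y →
      BotDev ⟨E, C.fill (.call x H)⟩ ⟨E, C.fill (H.subst x (.var y))⟩
  | c4 (E K : List Fml) (C : FCtx) (x : ℕ) (H : Fml) (y : ℕ) (F : Fml) :
      ¬ (Sequent.mk (E ++ (C.fill (.cex x H)) :: K) F).mentionsVar y →
      BotDev ⟨E ++ (C.fill (.cex x H)) :: K, F⟩
             ⟨E ++ (C.fill (H.subst x (.var y))) :: K, F⟩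

/-- `Y` is a `⊤`-development of `X`: `X` follows from `Y` by a rule other than Wait. -/
def TopDev (X Y : Sequent) : Prop := NonWaitStep Y X

/-! ## Arithmetic: CLA1 and CLA2 -/

def fSucc : FuncSym := ⟨1, 0⟩
def fPlus : FuncSym := ⟨2, 0⟩
def fTimes : FuncSym := ⟨2, 1⟩

def tv (x : ℕ) : Term := .var x
def t0 : Term := .const 0
def tS (t : Term) : Term := .func fSucc fun _ => t
def tPlus (a b : Term) : Term := .func fPlus (duo a b)
def tTimes (a b : Term) : Term := .func fTimes (duo a b)
def fEq (a b : Term) : Fml := .atom false .eq (duo a b)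
def fNeq (a b : Term) : Fml := .atom true .eq (duo a b)

/-- The language of CLA1: only the constant `0`, the function symbols `'`, `+`, `×`
and the predicate symbol `=`. -/
def Term.inLangA : Term → Prop
  | .var _ => True
  | .const c => c = 0
  | .func f ts => (f = fSucc ∨ f = fPlus ∨ f = fTimes) ∧ ∀ i, (ts i).inLangA

def Fml.inLangA : Fml → Prop
  | .tt => True
  | .ff => True
  | .atom _ p a => p = .eq ∧ ∀ i, (a i).inLangA
  | .and A B => A.inLangA ∧ B.inLangA
  | .or A B => A.inLangA ∧ B.inLangA
  | .cand A B => A.inLangA ∧ B.inLangA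
  | .cor A B => A.inLangA ∧ B.inLangA
  | .all _ A => A.inLangA
  | .ex _ A => A.inLangA
  | .call _ A => A.inLangA
  | .cex _ A => A.inLangA

def Sequent.inLangA (S : Sequent) : Prop := (∀ E ∈ S.ante, E.inLangA) ∧ S.succ.inLangA

def allClose : List ℕ → Fml → Fml
  | [], F => F
  | v :: vs, F => .all v (allClose vs F)

def callClose : List ℕ → Fml → Fml
  | [], F => F
  | v :: vs, F => .call v (callClose vs F)

/-- The induction formula `F(0) ∧ ∀x(F(x)→F(x')) → ∀x F(x)`. -/
def indFml (F : Fml) (x : ℕ) : Fml :=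
  (Fml.and (F.subst x t0) (.all x (F.imp (F.subst x (tS (tv x)))))).imp (.all x F)

/-- The axioms of PA: the `∀`-closures of the six defining axioms of `'`, `+`, `×`
together with the induction scheme for elementary formulas (of the language `lang`). -/
inductive IsPAAx (lang : Fml → Prop) : Fml → Prop
  | a1 : IsPAAx lang (.all 0 (fNeq t0 (tS (tv 0))))
  | a2 : IsPAAx lang (.all 0 (.all 1 ((fEq (tS (tv 0)) (tS (tv 1))).imp (fEq (tv 0) (tv 1)))))
  | a3 : IsPAAx lang (.all 0 (fEq (tPlus (tv 0) t0) (tv 0)))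
  | a4 : IsPAAx lang (.all 0 (.all 1
      (fEq (tPlus (tv 0) (tS (tv 1))) (tS (tPlus (tv 0) (tv 1))))))
  | a5 : IsPAAx lang (.all 0 (fEq (tTimes (tv 0) t0) t0))
  | a6 : IsPAAx lang (.all 0 (.all 1
      (fEq (tTimes (tv 0) (tS (tv 1))) (tPlus (tTimes (tv 0) (tv 1)) (tv 0)))))
  | ind (vs : List ℕ) (F : Fml) (x : ℕ) :
      F.elementary → lang F → (∀ y, (indFml F x).freeVar y → y ∈ vs) →
      IsPAAx lang (allClose vs (indFml F x))

/-- Axiom 7 of CLA1: `⊓x⊔y(y = x')`. -/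
def axSeven : Fml := .call 0 (.cex 1 (fEq (tv 1) (tS (tv 0))))

/-- The axioms of a CL-based arithmetic: the PA axioms plus `⊓x⊔y(y = x')`. -/
def IsCLAAx (lang : Fml → Prop) (A : Fml) : Prop := IsPAAx lang A ∨ A = axSeven

def CLA1Ax : Fml → Prop := IsCLAAx Fml.inLangA
def CLA2Ax : Fml → Prop := IsCLAAx fun _ => True

/-- (Extended) natural deductions of the CL-based arithmetics: a deduction of `F` from
hypotheses `Γ`, where `lc` is Logical Consequence (carrying a CL12-proof of the
corresponding sequent, so that these deductions are *extended* proofs) and `ci` is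
Constructive Induction (with a fresh variable `x`). -/
inductive CLADed (ax : Fml → Prop) : List Fml → Fml → Type
  | hyp (Γ : List Fml) (F : Fml) : F ∈ Γ → CLADed ax Γ F
  | axm (Γ : List Fml) (F : Fml) : ax F → CLADed ax Γ F
  | lc (Γ Gs : List Fml) (F : Fml) (L : List Sequent) :
      IsCL12Proof L ⟨Gs, F⟩ → (∀ G ∈ Gs, CLADed ax Γ G) → CLADed ax Γ F
  | ci (Γ : List Fml) (F : Fml) (x : ℕ) :
      (∀ E ∈ Γ, ¬ E.mentionsVar x) →
      CLADed ax Γ (F.subst x t0) →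
      CLADed ax (F :: Γ) (F.subst x (tS (tv x))) →
      CLADed ax Γ (.call x F)

/-- Provability of the sequent `Γ ∘̸– F` in a CL-based arithmetic. -/
def CLAProves (ax : Fml → Prop) (Γ : List Fml) (F : Fml) : Prop := Nonempty (CLADed ax Γ F)

/-- The standard interpretation of the function symbols. -/
def stdFn (f : FuncSym) (v : Fin f.ar → ℕ) : ℕ :=
  if h : f = fSucc then v ⟨0, by rw [h]; exact Nat.zero_lt_one⟩ + 1
  else if h : f = fPlus then
    v ⟨0, by rw [h]; exact Nat.zero_lt_two⟩ + v ⟨1, by rw [h]; exact Nat.one_lt_two⟩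
  else if h : f = fTimes then
    v ⟨0, by rw [h]; exact Nat.zero_lt_two⟩ * v ⟨1, by rw [h]; exact Nat.one_lt_two⟩
  else 0

def stdPr (p : PredSym) (v : Fin p.arity → ℕ) : Prop :=
  match p, v with
  | .eq, v => v ⟨0, Nat.zero_lt_two⟩ = v ⟨1, Nat.one_lt_two⟩
  | .pred _ _, _ => False

/-- The standard interpretation `†`. -/
def stdInterp : Interp where
  fn := stdFn
  pr := stdPr
  eq_equiv := ⟨fun _ => rfl, fun h => h.symm, fun h1 h2 => h1.trans h2⟩
  fn_congr := fun f u v h => by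
    have huv : u = v := funext fun i => h i
    show stdFn f u = stdFn f v
    rw [huv]
  pr_congr := fun p u v h => by
    have huv : u = v := funext fun i => h i
    rw [huv]

/-- An interpretation is standard iff it interprets `=` as identity, `'` as successor,
`+` as sum and `×` as product. -/
def Interp.IsStandard (I : Interp) : Prop :=
  (∀ v : Fin 2 → ℕ, I.pr .eq v ↔ v 0 = v 1) ∧
  (∀ v : Fin 1 → ℕ, I.fn fSucc v = v 0 + 1) ∧
  (∀ v : Fin 2 → ℕ, I.fn fPlus v = v 0 + v 1) ∧
  (∀ v : Fin 2 → ℕ, I.fn fTimes v = v 0 * v 1)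

/-- Provability in classical Peano arithmetic (by Gödel's completeness theorem:
semantic consequence of the PA axioms). -/
def PAProvable (F : Fml) : Prop :=
  ∀ (St : Struc) (e : ℕ → St.D),
    (∀ A, IsPAAx Fml.inLangA A → ∀ e' : ℕ → St.D, A.trueIn St e') → F.trueIn St e

/-! ## Primitive-recursive constructions -/

/-- Absolute primitive-recursive definitions (forms (I), (II), (III)). -/
inductive PRDefAbs : FuncSym → Fml → Prop
  | defI (f : FuncSym) (h : f.ar = 1) :
      PRDefAbs f (.all 0 (fEq (.func f fun _ => tv 0) (tS (tv 0))))
  | defII (f : FuncSym) :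
      PRDefAbs f (allClose (List.range f.ar) (fEq (.func f fun j => tv j.val) t0))
  | defIII (f : FuncSym) (i : Fin f.ar) :
      PRDefAbs f (allClose (List.range f.ar) (fEq (.func f fun j => tv j.val) (tv i.val)))

/-- Relative primitive-recursive definitions (forms (IV) composition and
(V) primitive recursion), together with the list of function symbols in terms of
which the new symbol is defined. -/
inductive PRDefRel : FuncSym → List FuncSym → Fml → Prop
  | defIV (f g : FuncSym) (hs : Fin g.ar → FuncSym)
      (hh : ∀ j, (hs j).ar = f.ar) :
      PRDefRel f (g :: List.ofFn hs)
        (allClose (List.range f.ar)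
          (fEq (.func f fun i => tv i.val)
               (.func g fun j => .func (hs j) fun i => tv i.val)))
  | defV (f g h : FuncSym) (n : ℕ) (hn : f.ar = n) (h1 : 1 ≤ n)
      (hg : g.ar = n - 1) (hh : h.ar = n + 1) :
      PRDefRel f [g, h]
        (.and (allClose (List.range' 1 (n - 1))
                 (fEq (.func f fun i => if i.val = 0 then t0 else tv i.val)
                      (.func g fun j => tv (j.val + 1))))
              (allClose (List.range n)
                 (fEq (.func f fun i => if i.val = 0 then tS (tv 0) else tv i.val)
                      (.func h fun j =>
                        if j.val = 0 then tv 0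
                        else if j.val = 1 then .func f fun i => tv i.val
                        else tv (j.val - 1)))))

/-- `Es` is a primitive-recursive construction of `f`. -/
def IsPRConstruction (f : FuncSym) (Es : List Fml) : Prop :=
  ∃ gs : List FuncSym, gs.length = Es.length ∧ gs.Nodup ∧ gs.getLast? = some f ∧
    ∀ (i : ℕ) (hi : i < Es.length) (hg : i < gs.length),
      PRDefAbs (gs[i]'hg) (Es[i]'hi) ∨
      ∃ deps : List FuncSym, PRDefRel (gs[i]'hg) deps (Es[i]'hi) ∧
        ∀ d ∈ deps, ∃ (j : ℕ) (hj : j < gs.length), j < i ∧ gs[j]'hj = d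

/-- The goal formula `⊓x₁…⊓xₙ⊔y (f(x₁,…,xₙ) = y)`. -/
def prGoal (f : FuncSym) : Fml :=
  callClose (List.range f.ar)
    (.cex f.ar (fEq (.func f fun i => tv i.val) (tv f.ar)))


/-!
Constructive induction on `x` proves `⊓y (x = y ⊔ x ≠ y)`. For `x = 0` a second induction on
`y` suffices: `0 = 0`, and `0 ≠ y'` by the axiom `0 ≠ x'`. For the step, the machine is asked about
`x'` and some `y`. It first learns whether `y = 0` or `y = w'` for some `w`; this is `⊓u ⊔w
(u = 0 ⊔ u = w')`, itself proved by constructive induction on `u`. If `y = 0` it answers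
`x' ≠ y`. Otherwise it asks the induction hypothesis about `w`: from `x = w` it infers `x' = y`,
and from `x ≠ w` it infers `x' ≠ y` by injectivity of successor.

Each such strategy is a CL12-proof. Since CL12-provability is closed under the rules of CL12
(proofs of the premises concatenate), these proofs are assembled rule by rule; a Wait step needs
only a valid elementarization and one premise per surface choice the environment may resolve.
-/

section Substitution

theorem comp_duo {α β : Sort*} (f : α → β) (a b : α) :
    (fun i => f (duo a b i)) = duo (f a) (f b) := by
  funext i
  by_cases h : (i : ℕ) = 0 <;> simp [duo, h]

theorem exists_duo {α : Sort*} (P : α → Prop) (a b : α) :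
    (∃ i, P (duo a b i)) ↔ P a ∨ P b := by
  constructor
  · rintro ⟨i, hi⟩
    by_cases h : (i : ℕ) = 0
    · exact .inl (by simpa [duo, h] using hi)
    · exact .inr (by simpa [duo, h] using hi)
  · rintro (h | h)
    exacts [⟨0, h⟩, ⟨1, h⟩]

@[simp] theorem Term.subst_tv (n x : ℕ) (t : Term) :
    (tv n).subst x t = if n = x then t else tv n := rfl

@[simp] theorem Term.subst_t0 (x : ℕ) (t : Term) : t0.subst x t = t0 := rfl

@[simp] theorem Term.subst_tS (s : Term) (x : ℕ) (t : Term) :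
    (tS s).subst x t = tS (s.subst x t) := rfl

@[simp] theorem Term.hasVar_tv (n y : ℕ) : (tv n).hasVar y ↔ n = y := Iff.rfl

@[simp] theorem Term.hasVar_t0 (y : ℕ) : ¬ t0.hasVar y := id

@[simp] theorem Term.hasVar_tS (s : Term) (y : ℕ) : (tS s).hasVar y ↔ s.hasVar y :=
  ⟨fun ⟨_, h⟩ => h, fun h => ⟨⟨0, Nat.zero_lt_one⟩, h⟩⟩

@[simp] theorem Fml.subst_fEq (a b : Term) (x : ℕ) (t : Term) :
    (fEq a b).subst x t = fEq (a.subst x t) (b.subst x t) :=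
  congrArg (Fml.atom false .eq) (comp_duo (Term.subst · x t) a b)

@[simp] theorem Fml.subst_fNeq (a b : Term) (x : ℕ) (t : Term) :
    (fNeq a b).subst x t = fNeq (a.subst x t) (b.subst x t) :=
  congrArg (Fml.atom true .eq) (comp_duo (Term.subst · x t) a b)

@[simp] theorem Fml.mentionsVar_fEq (a b : Term) (y : ℕ) :
    (fEq a b).mentionsVar y ↔ a.hasVar y ∨ b.hasVar y :=
  exists_duo (Term.hasVar y) a b

@[simp] theorem Fml.mentionsVar_fNeq (a b : Term) (y : ℕ) :
    (fNeq a b).mentionsVar y ↔ a.hasVar y ∨ b.hasVar y :=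
  exists_duo (Term.hasVar y) a b

@[simp] theorem Fml.not_bindsVar_fEq (a b : Term) (y : ℕ) : ¬ (fEq a b).bindsVar y := id

@[simp] theorem Fml.not_bindsVar_fNeq (a b : Term) (y : ℕ) : ¬ (fNeq a b).bindsVar y := id

@[simp] theorem Fml.negF_fEq (a b : Term) : (fEq a b).negF = fNeq a b := rfl

end Substitution

section Derivations

theorem CL12Step.mono {P Q : Set Sequent} (hPQ : P ⊆ Q) {X : Sequent} :
    CL12Step P X → CL12Step Q X := by
  rintro (⟨Y, hY, h⟩ | ⟨hs, hcand, hcor, hcall, hcex⟩)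
  · exact .inl ⟨Y, hPQ hY, h⟩
  refine .inr ⟨hs, fun C H0 H1 h => ?_, fun G K C H0 H1 h => ?_, fun C x H h => ?_,
    fun G K C x H h => ?_⟩
  · exact (hcand C H0 H1 h).imp (@hPQ _) (@hPQ _)
  · exact (hcor G K C H0 H1 h).imp (@hPQ _) (@hPQ _)
  · exact (hcall C x H h).imp fun _ => And.imp_right (@hPQ _)
  · exact (hcex G K C x H h).imp fun _ => And.imp_right (@hPQ _)

def IsCL12Derivation (L : List Sequent) : Prop :=
  ∀ (i : ℕ) (h : i < L.length), CL12Step {Y | Y ∈ L.take i} (L[i]'h)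

theorem IsCL12Derivation.nil : IsCL12Derivation [] := fun _ h => absurd h (Nat.not_lt_zero _)

theorem IsCL12Derivation.append {L₁ L₂ : List Sequent} (h₁ : IsCL12Derivation L₁)
    (h₂ : ∀ (i : ℕ) (h : i < L₂.length), CL12Step {Y | Y ∈ L₁ ++ L₂.take i} (L₂[i]'h)) :
    IsCL12Derivation (L₁ ++ L₂) := by
  intro i hi
  rw [List.getElem_append, List.take_append]
  split_ifs with hlt
  · rw [Nat.sub_eq_zero_of_le hlt.le, List.take_zero, List.append_nil]
    exact h₁ i hlt
  · rw [List.take_of_length_le (by omega)]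
    exact h₂ _ _

theorem exists_derivation_of_forall_proves {Ps : List Sequent}
    (hPs : ∀ Y ∈ Ps, CL12Proves Y) : ∃ L, IsCL12Derivation L ∧ ∀ Y ∈ Ps, Y ∈ L := by
  induction Ps with
  | nil => exact ⟨[], .nil, by simp⟩
  | cons P Ps ih =>
    obtain ⟨⟨LP, -, hLast, hLP⟩, hPs⟩ := List.forall_mem_cons.1 hPs
    obtain ⟨L, hL, hmem⟩ := ih hPs
    refine ⟨LP ++ L, IsCL12Derivation.append hLP fun i hi => (hL i hi).mono fun Y hY => ?_,
      ?_⟩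
    · exact List.mem_append_right _ hY
    · simpa [List.mem_of_getLast? hLast] using fun Y hY => .inr (hmem Y hY)

theorem CL12Proves.of_step {Ps : List Sequent} (hPs : ∀ Y ∈ Ps, CL12Proves Y) {X : Sequent}
    (h : CL12Step {Y | Y ∈ Ps} X) : CL12Proves X := by
  obtain ⟨L, hL, hmem⟩ := exists_derivation_of_forall_proves hPs
  refine ⟨L ++ [X], by simp, by simp, hL.append fun i hi => ?_⟩
  obtain rfl : i = 0 := by simpa using hi
  exact h.mono fun Y hY => by simpa using hmem Y hY

theorem CL12Proves.of_nonWaitStep {Y X : Sequent} (hY : CL12Proves Y) (h : NonWaitStep Y X) :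
    CL12Proves X :=
  of_step (Ps := [Y]) (by simpa using hY) (.inl ⟨Y, by simp, h⟩)

theorem CL12Proves.of_waitStep {Ps : List Sequent} (hPs : ∀ Y ∈ Ps, CL12Proves Y) {X : Sequent}
    (h : WaitStep {Y | Y ∈ Ps} X) : CL12Proves X :=
  of_step hPs (.inr h)

end Derivations

section Stability

variable {St : Struc} {e : ℕ → St.D}

theorem Fml.trueIn_negF (F : Fml) : F.negF.trueIn St e ↔ ¬ F.trueIn St e := by
  induction F generalizing e with
  | atom b => cases b <;> simp [Fml.negF, Fml.trueIn]
  | and A B ihA ihB | cand A B ihA ihB => simp only [Fml.negF, Fml.trueIn, ihA, ihB]; tauto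
  | or A B ihA ihB | cor A B ihA ihB => simp only [Fml.negF, Fml.trueIn, ihA, ihB]; tauto
  | all x A ih | ex x A ih | call x A ih | cex x A ih => simp [Fml.negF, Fml.trueIn, ih]
  | tt | ff => simp [Fml.negF, Fml.trueIn]

theorem Fml.trueIn_imp (A B : Fml) :
    (A.imp B).trueIn St e ↔ (A.trueIn St e → B.trueIn St e) := by
  rw [Fml.imp, Fml.trueIn, trueIn_negF, imp_iff_not_or]

theorem trueIn_bigAnd (A : Fml) (l : List Fml) :
    (bigAnd A l).trueIn St e ↔ ∀ B ∈ A :: l, B.trueIn St e := by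
  induction l generalizing A with
  | nil => simp [bigAnd]
  | cons B l ih => simp [bigAnd, Fml.trueIn, ih]

theorem Sequent.stable_iff (S : Sequent) :
    S.stable ↔ ∀ (St : Struc) (e : ℕ → St.D),
      (∀ E ∈ S.ante, E.elz.trueIn St e) → S.succ.elz.trueIn St e := by
  obtain ⟨_ | ⟨E, Γ⟩, F⟩ := S
  · simp [Sequent.stable, Sequent.elz, FValid]
  · simp [Sequent.stable, Sequent.elz, FValid, Fml.trueIn_imp, trueIn_bigAnd]

theorem Sequent.stable_of_succ_call (Γ : List Fml) (x : ℕ) (A : Fml) :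
    (Sequent.mk Γ (.call x A)).stable :=
  (stable_iff _).2 fun _ _ _ => trivial

theorem Sequent.stable_of_mem_ante {Γ : List Fml} {E : Fml} (hE : E ∈ Γ) (hff : E.elz = .ff)
    (F : Fml) : (Sequent.mk Γ F).stable :=
  (stable_iff _).2 fun _ _ h => absurd (h E hE) (by rw [hff]; exact id)

theorem Fml.elz_of_elementary {F : Fml} (h : F.elementary) : F.elz = F := by
  induction F with
  | and A B ihA ihB | or A B ihA ihB => simp [Fml.elz, ihA h.1, ihB h.2]
  | all x A ih | ex x A ih => simp [Fml.elz, ih h]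
  | cand | cor | call | cex => exact absurd h id
  | tt | ff | atom => rfl

theorem Fml.trueIn_of_mem_ante {Γ : List Fml} {E : Fml} (hE : E ∈ Γ) (h : E.elementary)
    (hΓ : ∀ G ∈ Γ, G.elz.trueIn St e) : E.trueIn St e :=
  elz_of_elementary h ▸ hΓ E hE

@[simp] theorem Term.evalS_tv (n : ℕ) : (tv n).evalS St e = e n := rfl

@[simp] theorem Term.evalS_t0 : t0.evalS St e = St.cn 0 := rfl

@[simp] theorem Term.evalS_tS (t : Term) :
    (tS t).evalS St e = St.fn fSucc fun _ => t.evalS St e := rfl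

theorem Struc.pr_eq_duo (a b : Term) :
    (St.pr .eq fun i => (duo a b i).evalS St e) ↔ a.evalS St e = b.evalS St e :=
  (congrArg (St.pr .eq) (comp_duo (Term.evalS St e) a b)).to_iff.trans (St.eq_iden _ _)

@[simp] theorem Fml.trueIn_fEq (a b : Term) :
    (fEq a b).trueIn St e ↔ a.evalS St e = b.evalS St e := by
  simp [fEq, Fml.trueIn, Struc.pr_eq_duo]

@[simp] theorem Fml.trueIn_fNeq (a b : Term) :
    (fNeq a b).trueIn St e ↔ a.evalS St e ≠ b.evalS St e := by
  simp [fNeq, Fml.trueIn, Struc.pr_eq_duo]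

end Stability

section Wait

/-- In an antecedent, such a formula gives Wait nothing to check. -/
def Fml.NoSurfaceCorCex (E : Fml) : Prop :=
  ∀ C : FCtx, (∀ H0 H1, E ≠ C.fill (.cor H0 H1)) ∧ ∀ x H, E ≠ C.fill (.cex x H)

/-- In a succedent, such a formula gives Wait nothing to check. -/
def Fml.NoSurfaceCandCall (F : Fml) : Prop :=
  ∀ C : FCtx, (∀ H0 H1, F ≠ C.fill (.cand H0 H1)) ∧ ∀ x H, F ≠ C.fill (.call x H)

theorem FCtx.elementary_of_fill {C : FCtx} {G : Fml} (h : (C.fill G).elementary) :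
    G.elementary := by
  induction C with
  | hole => exact h
  | andL _ _ ih | orL _ _ ih => exact ih h.1
  | andR _ _ ih | orR _ _ ih => exact ih h.2
  | allC _ _ ih | exC _ _ ih => exact ih h

@[simp] theorem Fml.elementary.noSurfaceCorCex {E : Fml} (h : E.elementary) :
    E.NoSurfaceCorCex := by
  intro C
  constructor <;> intro _ _ hE <;> subst hE <;> exact FCtx.elementary_of_fill h

@[simp] theorem Fml.elementary.noSurfaceCandCall {F : Fml} (h : F.elementary) :
    F.NoSurfaceCandCall := by
  intro C
  constructor <;> intro _ _ hF <;> subst hF <;> exact FCtx.elementary_of_fill h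

@[simp] theorem Fml.noSurfaceCorCex_call (x : ℕ) (A : Fml) :
    (Fml.call x A).NoSurfaceCorCex := by
  intro C
  constructor <;> intro _ _ h <;> cases C <;> simp [FCtx.fill] at h

@[simp] theorem Fml.noSurfaceCandCall_cor (A B : Fml) : (Fml.cor A B).NoSurfaceCandCall := by
  intro C
  constructor <;> intro _ _ h <;> cases C <;> simp [FCtx.fill] at h

theorem eq_or_mem_of_append_cons_eq {α : Type*} {G K G' K' : List α} {a b : α}
    (h : G ++ a :: K = G' ++ b :: K') : (G = G' ∧ a = b ∧ K = K') ∨ b ∈ G ++ K := by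
  induction G generalizing G' with
  | nil =>
    cases G' with
    | nil => simp_all
    | cons g G' => simp_all
  | cons g G ih =>
    cases G' with
    | nil => simp_all
    | cons g' G' =>
      simp only [List.cons_append, List.cons.injEq] at h
      obtain ⟨rfl, h⟩ := h
      rcases ih h with ⟨rfl, rfl, rfl⟩ | hb
      · exact .inl ⟨rfl, rfl, rfl⟩
      · exact .inr (List.mem_cons_of_mem g hb)

variable {P : Set Sequent}

theorem waitStep_of_noSurface {Γ : List Fml} {F : Fml} (hs : (Sequent.mk Γ F).stable)
    (hΓ : ∀ E ∈ Γ, E.NoSurfaceCorCex) (hF : F.NoSurfaceCandCall) : WaitStep P ⟨Γ, F⟩ := by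
  refine ⟨hs, fun C _ _ h => absurd h ((hF C).1 _ _), fun G K C _ _ h => ?_,
    fun C _ _ h => absurd h ((hF C).2 _ _), fun G K C _ _ h => ?_⟩
  · exact absurd rfl ((hΓ _ (h ▸ List.mem_append_cons_self) C).1 _ _)
  · exact absurd rfl ((hΓ _ (h ▸ List.mem_append_cons_self) C).2 _ _)

theorem waitStep_ante_cor {G K : List Fml} {A B F : Fml}
    (hGK : ∀ E ∈ G ++ K, E.NoSurfaceCorCex) (hF : F.NoSurfaceCandCall)
    (hA : ⟨G ++ A :: K, F⟩ ∈ P) (hB : ⟨G ++ B :: K, F⟩ ∈ P) :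
    WaitStep P ⟨G ++ .cor A B :: K, F⟩ := by
  refine ⟨Sequent.stable_of_mem_ante List.mem_append_cons_self rfl F,
    fun C _ _ h => absurd h ((hF C).1 _ _), ?_, fun C _ _ h => absurd h ((hF C).2 _ _), ?_⟩
  · intro G' K' C H0 H1 h
    rcases eq_or_mem_of_append_cons_eq h with ⟨rfl, hfill, rfl⟩ | hmem
    · cases C <;> simp only [FCtx.fill, reduceCtorEq, Fml.cor.injEq] at hfill
      obtain ⟨rfl, rfl⟩ := hfill
      exact ⟨hA, hB⟩
    · exact absurd rfl ((hGK _ hmem C).1 _ _)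
  · intro G' K' C x H h
    rcases eq_or_mem_of_append_cons_eq h with ⟨-, hfill, -⟩ | hmem
    · cases C <;> simp [FCtx.fill] at hfill
    · exact absurd rfl ((hGK _ hmem C).2 _ _)

theorem waitStep_ante_cex {G K : List Fml} {x : ℕ} {A F : Fml} {y : ℕ}
    (hGK : ∀ E ∈ G ++ K, E.NoSurfaceCorCex) (hF : F.NoSurfaceCandCall)
    (hy : ¬ (Sequent.mk (G ++ .cex x A :: K) F).mentionsVar y)
    (hA : ⟨G ++ A.subst x (.var y) :: K, F⟩ ∈ P) :
    WaitStep P ⟨G ++ .cex x A :: K, F⟩ := by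
  refine ⟨Sequent.stable_of_mem_ante List.mem_append_cons_self rfl F,
    fun C _ _ h => absurd h ((hF C).1 _ _), ?_, fun C _ _ h => absurd h ((hF C).2 _ _), ?_⟩
  · intro G' K' C H0 H1 h
    rcases eq_or_mem_of_append_cons_eq h with ⟨-, hfill, -⟩ | hmem
    · cases C <;> simp [FCtx.fill] at hfill
    · exact absurd rfl ((hGK _ hmem C).1 _ _)
  · intro G' K' C x' H h
    rcases eq_or_mem_of_append_cons_eq h with ⟨rfl, hfill, rfl⟩ | hmem
    · cases C <;> simp only [FCtx.fill, reduceCtorEq, Fml.cex.injEq] at hfill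
      obtain ⟨rfl, rfl⟩ := hfill
      exact ⟨y, hy, hA⟩
    · exact absurd rfl ((hGK _ hmem C).2 _ _)

theorem waitStep_succ_call {Γ : List Fml} {x : ℕ} {A : Fml} {y : ℕ}
    (hΓ : ∀ E ∈ Γ, E.NoSurfaceCorCex) (hy : ¬ (Sequent.mk Γ (.call x A)).mentionsVar y)
    (hA : ⟨Γ, A.subst x (.var y)⟩ ∈ P) : WaitStep P ⟨Γ, .call x A⟩ := by
  refine ⟨Sequent.stable_of_succ_call Γ x A, fun C _ _ h => ?_, fun G K C _ _ h => ?_,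
    fun C x' H h => ?_, fun G K C _ _ h => ?_⟩
  · cases C <;> simp [FCtx.fill] at h
  · exact absurd rfl ((hΓ _ (h ▸ List.mem_append_cons_self) C).1 _ _)
  · cases C <;> simp only [FCtx.fill, reduceCtorEq, Fml.call.injEq] at h
    obtain ⟨rfl, rfl⟩ := h
    exact ⟨y, hy, hA⟩
  · exact absurd rfl ((hΓ _ (h ▸ List.mem_append_cons_self) C).2 _ _)

end Wait

namespace CL12Proves

variable {Γ G K : List Fml} {F : Fml}

theorem of_stable (hs : (Sequent.mk Γ F).stable) (hΓ : ∀ E ∈ Γ, E.NoSurfaceCorCex)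
    (hF : F.NoSurfaceCandCall) : CL12Proves ⟨Γ, F⟩ :=
  of_waitStep (Ps := []) (by simp) (waitStep_of_noSurface hs hΓ hF)

theorem ante_cor {A B : Fml} (hGK : ∀ E ∈ G ++ K, E.NoSurfaceCorCex)
    (hF : F.NoSurfaceCandCall) (hA : CL12Proves ⟨G ++ A :: K, F⟩)
    (hB : CL12Proves ⟨G ++ B :: K, F⟩) : CL12Proves ⟨G ++ .cor A B :: K, F⟩ :=
  of_waitStep (Ps := [⟨G ++ A :: K, F⟩, ⟨G ++ B :: K, F⟩]) (by simp [hA, hB])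
    (waitStep_ante_cor hGK hF (by simp) (by simp))

theorem ante_cex {x : ℕ} {A : Fml} (y : ℕ) (A' : Fml) (hA' : A.subst x (tv y) = A')
    (hGK : ∀ E ∈ G ++ K, E.NoSurfaceCorCex) (hF : F.NoSurfaceCandCall)
    (hy : ¬ (Sequent.mk (G ++ .cex x A :: K) F).mentionsVar y)
    (h : CL12Proves ⟨G ++ A' :: K, F⟩) : CL12Proves ⟨G ++ .cex x A :: K, F⟩ :=
  of_waitStep (Ps := [⟨G ++ A' :: K, F⟩]) (by simpa using h)
    (waitStep_ante_cex hGK hF hy (by simp [← hA', tv]))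

theorem succ_call {x : ℕ} {A : Fml} (y : ℕ) (A' : Fml) (hA' : A.subst x (tv y) = A')
    (hΓ : ∀ E ∈ Γ, E.NoSurfaceCorCex) (hy : ¬ (Sequent.mk Γ (.call x A)).mentionsVar y)
    (h : CL12Proves ⟨Γ, A'⟩) : CL12Proves ⟨Γ, .call x A⟩ :=
  of_waitStep (Ps := [⟨Γ, A'⟩]) (by simpa using h)
    (waitStep_succ_call hΓ hy (by simp [← hA', tv]))

theorem cor_left {A B : Fml} (h : CL12Proves ⟨Γ, A⟩) : CL12Proves ⟨Γ, .cor A B⟩ :=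
  h.of_nonWaitStep (.corChoose Γ .hole A B false)

theorem cor_right {A B : Fml} (h : CL12Proves ⟨Γ, B⟩) : CL12Proves ⟨Γ, .cor A B⟩ :=
  h.of_nonWaitStep (.corChoose Γ .hole A B true)

theorem cex_choose {x : ℕ} {H : Fml} (t : Term) (H' : Fml) (hH' : H.subst x t = H')
    (ht : TermOk t ⟨Γ, H'⟩) (h : CL12Proves ⟨Γ, H'⟩) : CL12Proves ⟨Γ, .cex x H⟩ := by
  subst hH'
  exact h.of_nonWaitStep (.cexChoose Γ .hole x H t ht)

theorem ante_call_choose {x : ℕ} {H : Fml} (t : Term) (H' : Fml) (hH' : H.subst x t = H')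
    (ht : TermOk t ⟨G ++ H' :: K, F⟩) (h : CL12Proves ⟨G ++ H' :: K, F⟩) :
    CL12Proves ⟨G ++ .call x H :: K, F⟩ := by
  subst hH'
  exact h.of_nonWaitStep (.callChoose G K .hole x H t F ht)

end CL12Proves

namespace CLAProves

variable {ax : Fml → Prop} {Γ : List Fml}

theorem hyp {F : Fml} (h : F ∈ Γ) : CLAProves ax Γ F := ⟨.hyp Γ F h⟩

theorem axm {F : Fml} (h : ax F) : CLAProves ax Γ F := ⟨.axm Γ F h⟩

theorem lc {Gs : List Fml} {F : Fml} (hF : CL12Proves ⟨Gs, F⟩)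
    (hGs : ∀ G ∈ Gs, CLAProves ax Γ G) : CLAProves ax Γ F :=
  let ⟨L, hL⟩ := hF
  ⟨.lc Γ Gs F L hL fun G hG => (hGs G hG).some⟩

theorem ci {F : Fml} {x : ℕ} (hΓ : ∀ E ∈ Γ, ¬ E.mentionsVar x)
    (h0 : CLAProves ax Γ (F.subst x t0))
    (h1 : CLAProves ax (F :: Γ) (F.subst x (tS (tv x)))) : CLAProves ax Γ (.call x F) :=
  ⟨.ci Γ F x hΓ h0.some h1.some⟩

end CLAProves

section Arithmetic

def eqOrNe (a b : Term) : Fml := .cor (fEq a b) (fNeq a b)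

/-- `⊔w (u = 0 ⊔ u = w')`, where `w` is the variable `3`. -/
def zeroOrSucc (u : Term) : Fml := .cex 3 (.cor (fEq u t0) (fEq u (tS (tv 3))))

def axZeroNeSucc : Fml := .all 0 (fNeq t0 (tS (tv 0)))

def axSuccInj : Fml :=
  .all 0 (.all 1 ((fEq (tS (tv 0)) (tS (tv 1))).imp (fEq (tv 0) (tv 1))))

attribute [local simp] Sequent.mentionsVar Fml.mentionsVar Sequent.bindsVar Fml.bindsVar

@[simp] theorem Fml.subst_eqOrNe (a b : Term) (x : ℕ) (t : Term) :
    (eqOrNe a b).subst x t = eqOrNe (a.subst x t) (b.subst x t) := by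
  simp [eqOrNe, Fml.subst]

@[simp] theorem Fml.subst_zeroOrSucc (u : Term) {x : ℕ} (hx : x ≠ 3) (t : Term) :
    (zeroOrSucc u).subst x t = zeroOrSucc (u.subst x t) := by
  simp [zeroOrSucc, Fml.subst, hx.symm]

@[simp] theorem Fml.elementary_fEq (a b : Term) : (fEq a b).elementary := trivial

@[simp] theorem Fml.elementary_fNeq (a b : Term) : (fNeq a b).elementary := trivial

@[simp] theorem elementary_axZeroNeSucc : axZeroNeSucc.elementary := trivial

@[simp] theorem elementary_axSuccInj : axSuccInj.elementary := ⟨trivial, trivial⟩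

@[simp] theorem noSurfaceCandCall_eqOrNe (a b : Term) : (eqOrNe a b).NoSurfaceCandCall :=
  Fml.noSurfaceCandCall_cor _ _

variable {Γ : List Fml}

theorem stable_eq_refl (t : Term) : (Sequent.mk [] (fEq t t)).stable :=
  (Sequent.stable_iff _).2 fun _ _ _ => by simp [Fml.elz_of_elementary]

theorem stable_zero_ne_succ (h : axZeroNeSucc ∈ Γ) (a : Term) :
    (Sequent.mk Γ (fNeq t0 (tS a))).stable := by
  refine (Sequent.stable_iff _).2 fun St e hΓ => ?_
  have h0 := Fml.trueIn_of_mem_ante h elementary_axZeroNeSucc hΓ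
  simp only [axZeroNeSucc, Fml.trueIn, Fml.trueIn_fNeq] at h0
  simpa [Fml.elz_of_elementary] using h0 (a.evalS St e)

theorem stable_succ_ne_of_eq_zero {a b : Term} (hb : fEq b t0 ∈ Γ) (h : axZeroNeSucc ∈ Γ) :
    (Sequent.mk Γ (fNeq (tS a) b)).stable := by
  refine (Sequent.stable_iff _).2 fun St e hΓ => ?_
  have h0 := Fml.trueIn_of_mem_ante h elementary_axZeroNeSucc hΓ
  simp only [axZeroNeSucc, Fml.trueIn, Fml.trueIn_fNeq] at h0
  have hb := Fml.trueIn_of_mem_ante hb (Fml.elementary_fEq _ _) hΓ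
  simp only [Fml.trueIn_fEq] at hb
  simpa [Fml.elz_of_elementary, hb, eq_comm] using h0 (a.evalS St e)

theorem stable_succ_eq_of_eq {a b c : Term} (hac : fEq a c ∈ Γ) (hb : fEq b (tS c) ∈ Γ) :
    (Sequent.mk Γ (fEq (tS a) b)).stable := by
  refine (Sequent.stable_iff _).2 fun St e hΓ => ?_
  have hac := Fml.trueIn_of_mem_ante hac (Fml.elementary_fEq _ _) hΓ
  have hb := Fml.trueIn_of_mem_ante hb (Fml.elementary_fEq _ _) hΓ
  simp only [Fml.trueIn_fEq] at hac hb
  simp [Fml.elz_of_elementary, hac, hb]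

theorem stable_succ_ne_of_ne {a b c : Term} (hac : fNeq a c ∈ Γ) (hb : fEq b (tS c) ∈ Γ)
    (h : axSuccInj ∈ Γ) : (Sequent.mk Γ (fNeq (tS a) b)).stable := by
  refine (Sequent.stable_iff _).2 fun St e hΓ => ?_
  have h0 := Fml.trueIn_of_mem_ante h elementary_axSuccInj hΓ
  simp only [axSuccInj, Fml.trueIn, Fml.trueIn_imp, Fml.trueIn_fEq, Term.evalS_tS, Term.evalS_tv,
    zero_ne_one, ↓reduceIte] at h0
  have hac := Fml.trueIn_of_mem_ante hac (Fml.elementary_fNeq _ _) hΓ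
  have hb := Fml.trueIn_of_mem_ante hb (Fml.elementary_fEq _ _) hΓ
  simp only [Fml.trueIn_fEq, Fml.trueIn_fNeq] at hac hb
  rw [Fml.elz_of_elementary (Fml.elementary_fNeq _ _), Fml.trueIn_fNeq, hb]
  exact fun h => hac (h0 _ _ h)

theorem cl12_eq_refl (t : Term) : CL12Proves ⟨[], fEq t t⟩ :=
  .of_stable (stable_eq_refl t) (by simp) (by simp)

theorem cl12_zero_eqOrNe_succ (a : Term) :
    CL12Proves ⟨[axZeroNeSucc], eqOrNe t0 (tS a)⟩ :=
  (CL12Proves.of_stable (stable_zero_ne_succ (by simp) a) (by simp) (by simp)).cor_right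

theorem cl12_zeroOrSucc_zero : CL12Proves ⟨[], zeroOrSucc t0⟩ :=
  .cex_choose t0 (.cor (fEq t0 t0) (fEq t0 (tS t0))) (by simp [Fml.subst]) (.inl ⟨0, rfl⟩)
    (cl12_eq_refl t0).cor_left

theorem cl12_zeroOrSucc_succ (x : ℕ) : CL12Proves ⟨[], zeroOrSucc (tS (tv x))⟩ :=
  .cex_choose (tv x) (.cor (fEq (tS (tv x)) t0) (fEq (tS (tv x)) (tS (tv x))))
    (by simp [Fml.subst]) (.inr ⟨x, rfl, by simp⟩) (cl12_eq_refl _).cor_right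

theorem cl12_call_eqOrNe_succ :
    CL12Proves ⟨[.call 1 (eqOrNe (tv 0) (tv 1)), .call 2 (zeroOrSucc (tv 2)), axZeroNeSucc,
      axSuccInj], .call 1 (eqOrNe (tS (tv 0)) (tv 1))⟩ := by
  -- `x` is the variable 0, the environment's `y` becomes 4 and its predecessor `w` becomes 5
  refine .succ_call 4 (eqOrNe (tS (tv 0)) (tv 4)) (by simp) (by simp)
    (by simp [eqOrNe, zeroOrSucc, axZeroNeSucc, axSuccInj, Fml.imp]) ?_
  refine .ante_call_choose (G := [_]) (tv 4) (zeroOrSucc (tv 4)) (by simp)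
    (.inr ⟨4, rfl, by simp [eqOrNe, zeroOrSucc, axZeroNeSucc, axSuccInj, Fml.imp]⟩) ?_
  refine .ante_cex (G := [_]) 5 (.cor (fEq (tv 4) t0) (fEq (tv 4) (tS (tv 5))))
    (by simp [Fml.subst]) (by simp) (by simp)
    (by simp [eqOrNe, axZeroNeSucc, axSuccInj, Fml.imp]) ?_
  refine .ante_cor (G := [_]) (by simp) (by simp) ?_ ?_
  · exact .cor_right
      (.of_stable (stable_succ_ne_of_eq_zero (by simp) (by simp)) (by simp) (by simp))
  refine .ante_call_choose (G := []) (tv 5) (eqOrNe (tv 0) (tv 5)) (by simp)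
    (.inr ⟨5, rfl, by simp [eqOrNe, axZeroNeSucc, axSuccInj, Fml.imp]⟩) ?_
  refine .ante_cor (G := []) (by simp) (by simp) ?_ ?_
  · exact .cor_left
      (.of_stable (stable_succ_eq_of_eq (c := tv 5) (by simp) (by simp)) (by simp) (by simp))
  · exact .cor_right (.of_stable (stable_succ_ne_of_ne (c := tv 5) (by simp) (by simp) (by simp))
      (by simp) (by simp))

variable {ax : Fml → Prop}

theorem claProves_call_zeroOrSucc (hΓ : ∀ E ∈ Γ, ¬ E.mentionsVar 2) :
    CLAProves ax Γ (.call 2 (zeroOrSucc (tv 2))) :=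
  .ci hΓ (by simpa using CLAProves.lc cl12_zeroOrSucc_zero (by simp))
    (by simpa using CLAProves.lc (cl12_zeroOrSucc_succ 2) (by simp))

theorem claProves_call_eqOrNe_zero (hA1 : ax axZeroNeSucc) :
    CLAProves ax [] (.call 1 (eqOrNe t0 (tv 1))) :=
  .ci (by simp)
    (by simpa using CLAProves.lc (F := eqOrNe t0 t0) (cl12_eq_refl t0).cor_left (by simp))
    (by simpa using CLAProves.lc (cl12_zero_eqOrNe_succ (tv 1)) (by simpa using .axm hA1))

theorem claProves_call_eqOrNe_succ (hA1 : ax axZeroNeSucc) (hA2 : ax axSuccInj) :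
    CLAProves ax [.call 1 (eqOrNe (tv 0) (tv 1))] (.call 1 (eqOrNe (tS (tv 0)) (tv 1))) := by
  refine .lc cl12_call_eqOrNe_succ fun G hG => ?_
  simp only [List.mem_cons, List.not_mem_nil, or_false] at hG
  rcases hG with rfl | rfl | rfl | rfl
  exacts [.hyp (by simp), claProves_call_zeroOrSucc (by simp [eqOrNe]), .axm hA1, .axm hA2]

end Arithmetic

/-- CLA1 proves `⊓x⊓y (x = y ⊔ x ≠ y)`: the decidability of
equality of natural numbers. -/
theorem cla1_proves_eq_decidable :
    CLAProves CLA1Ax []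
      (.call 0 (.call 1 (.cor (fEq (tv 0) (tv 1)) (fNeq (tv 0) (tv 1))))) := by
  have hA1 : CLA1Ax axZeroNeSucc := .inl .a1
  have hA2 : CLA1Ax axSuccInj := .inl .a2
  show CLAProves CLA1Ax [] (.call 0 (.call 1 (eqOrNe (tv 0) (tv 1))))
  exact .ci (by simp) (by simpa [Fml.subst] using claProves_call_eqOrNe_zero hA1)
    (by simpa [Fml.subst] using claProves_call_eqOrNe_succ hA1 hA2)

end

end CoL
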